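/- arXiv:2602.05254 — 10 statements merged into one kernel-verified Lean document; each statement's English description precedes it below -/
import Mathlib

section
/- Let q = 3^m and let C = {(x, x²) : x ∈ F_q, x ≠ 0} ∪ {(x, −x²) : x ∈ F_q, x ≠ 0} ⊆ F_q². Then C is a capset and C has exactly 2(q−1) elements. -/
/-- Let `q = 3^m` and `C = {(x, x²) : x ≠ 0} ∪ {(x, −x²) : x ≠ 0} ⊆ F_q²`.
Then `C` is a capset of size `2(q − 1)`. -/
theorem two_conics_capset (m : ℕ) (hm : 1 ≤ m)
    (F : Type) [Field F] [Fintype F] (hcard : Fintype.card F = 3 ^ m)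
    (C : Set (F × F))
    (hC : C = {p : F × F | (∃ x : F, x ≠ 0 ∧ p = (x, x ^ 2)) ∨
      (∃ x : F, x ≠ 0 ∧ p = (x, -x ^ 2))}) :
    (∀ P ∈ C, ∀ Q ∈ C, ∀ R ∈ C,
      P ≠ Q → P ≠ R → Q ≠ R → P + Q + R ≠ 0) ∧
    C.ncard = 2 * (3 ^ m - 1) := by
  have h3 : (3 : F) = 0 := by
    have h0 : ((Fintype.card F : ℕ) : F) = 0 := FiniteField.cast_card_eq_zero F
    rw [hcard] at h0
    push_cast at h0
    exact pow_eq_zero_iff (by omega) |>.mp h0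
  have h2 : (2 : F) ≠ 0 := by
    intro h
    apply (one_ne_zero : (1 : F) ≠ 0)
    linear_combination h3 - h
  subst hC
  constructor
  · rintro P hP Q hQ R hR hPQ hPR hQR hne
    obtain ⟨a, ha, rfl⟩ | ⟨a, ha, rfl⟩ := hP <;>
      obtain ⟨b, hb, rfl⟩ | ⟨b, hb, rfl⟩ := hQ <;>
        obtain ⟨c, hc, rfl⟩ | ⟨c, hc, rfl⟩ := hR <;>
          simp only [Prod.ext_iff, Prod.mk_add_mk, Prod.fst_zero, Prod.snd_zero] at hne <;>
            obtain ⟨e1, e2⟩ := hne <;>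
              have hc' : c = -a - b := by linear_combination e1
    -- 8 cases
    · rw [hc'] at e2
      have hab : a = b := by
        have hsq : (a - b) ^ 2 = 0 := by
          linear_combination 2 * e2 + (-(a^2) - 2*a*b - b^2) * h3
        exact sub_eq_zero.mp (pow_eq_zero_iff (by norm_num) |>.mp hsq)
      exact hPQ (by rw [hab])
    · rw [hc'] at e2
      have hab : a * b = 0 := by linear_combination e2 + a*b*h3
      rcases mul_eq_zero.mp hab with h | h
      exacts [ha h, hb h]
    · rw [hc'] at e2
      have hab : a * (a + b) = 0 := by linear_combination 2*e2 + (-(a^2) - a*b)*h3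
      rcases mul_eq_zero.mp hab with h | h
      · exact ha h
      · exact hc (by rw [hc']; linear_combination -h)
    · rw [hc'] at e2
      have hab : b * (a + b) = 0 := by linear_combination -2*e2 + (-(b^2) - a*b)*h3
      rcases mul_eq_zero.mp hab with h | h
      · exact hb h
      · exact hc (by rw [hc']; linear_combination -h)
    · rw [hc'] at e2
      have hab : b * (a + b) = 0 := by linear_combination 2*e2 + (-(b^2) - a*b)*h3
      rcases mul_eq_zero.mp hab with h | h
      · exact hb h
      · exact hc (by rw [hc']; linear_combination -h)
    · rw [hc'] at e2
      have hab : a * (a + b) = 0 := by linear_combination -2*e2 + (-(a^2) - a*b)*h3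
      rcases mul_eq_zero.mp hab with h | h
      · exact ha h
      · exact hc (by rw [hc']; linear_combination -h)
    · rw [hc'] at e2
      have hab : a * b = 0 := by linear_combination -e2 + a*b*h3
      rcases mul_eq_zero.mp hab with h | h
      exacts [ha h, hb h]
    · rw [hc'] at e2
      have hab : a = b := by
        have hsq : (a - b) ^ 2 = 0 := by
          linear_combination -2 * e2 + (-(a^2) - 2*a*b - b^2) * h3
        exact sub_eq_zero.mp (pow_eq_zero_iff (by norm_num) |>.mp hsq)
      exact hPQ (by rw [hab])
  · have hrw : {p : F × F | (∃ x : F, x ≠ 0 ∧ p = (x, x ^ 2)) ∨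
        (∃ x : F, x ≠ 0 ∧ p = (x, -x ^ 2))} =
        (fun x : F => (x, x ^ 2)) '' {x : F | x ≠ 0} ∪
          (fun x : F => (x, -x ^ 2)) '' {x : F | x ≠ 0} := by
      ext p
      simp only [Set.mem_setOf_eq, Set.mem_union, Set.mem_image]
      constructor
      · rintro (⟨x, hx, rfl⟩ | ⟨x, hx, rfl⟩)
        exacts [Or.inl ⟨x, hx, rfl⟩, Or.inr ⟨x, hx, rfl⟩]
      · rintro (⟨x, hx, rfl⟩ | ⟨x, hx, rfl⟩)
        exacts [Or.inl ⟨x, hx, rfl⟩, Or.inr ⟨x, hx, rfl⟩]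
    rw [hrw]
    have hdisj : Disjoint ((fun x : F => (x, x ^ 2)) '' {x : F | x ≠ 0})
        ((fun x : F => (x, -x ^ 2)) '' {x : F | x ≠ 0}) := by
      rw [Set.disjoint_left]
      rintro p ⟨x, hx, rfl⟩ ⟨y, hy, hxy⟩
      simp only [Prod.mk.injEq] at hxy
      obtain ⟨rfl, h2'⟩ := hxy
      apply hx
      have hsq : y ^ 2 = 0 := by
        have hx2 : (2 : F) * y ^ 2 = 0 := by linear_combination -h2'
        exact (mul_eq_zero.mp hx2).resolve_left h2
      exact pow_eq_zero_iff (by norm_num) |>.mp hsq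
    have hinj1 : Function.Injective (fun x : F => (x, x ^ 2)) := fun x y h =>
      congrArg Prod.fst h
    have hinj2 : Function.Injective (fun x : F => (x, -x ^ 2)) := fun x y h =>
      congrArg Prod.fst h
    rw [Set.ncard_union_eq hdisj (Set.toFinite _) (Set.toFinite _),
      Set.ncard_image_of_injective _ hinj1, Set.ncard_image_of_injective _ hinj2]
    have hne : {x : F | x ≠ 0} = ({0} : Set F)ᶜ := by ext x; simp
    have hcompl : ({0} : Set F)ᶜ.ncard = 3 ^ m - 1 := by
      have := Set.ncard_add_ncard_compl ({0} : Set F)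
      rw [Set.ncard_singleton, Nat.card_eq_fintype_card, hcard] at this
      omega
    rw [hne, hcompl]
    have : 1 ≤ 3 ^ m := Nat.one_le_pow _ _ (by norm_num)
    omega
end

section
/- Let q = 3^m with m odd and let C = {(x, x²) : x ∈ F_q, x ≠ 0} ∪ {(x, −x²) : x ∈ F_q, x ≠ 0} ⊆ F_q². Then C is a complete capset: C is a capset and for every point P ∈ F_q² \ C there exist two distinct points Q, R ∈ C with P + Q + R = 0. -/
open Classical in
lemma aux_sq_dichotomy (F : Type) [Field F] [Fintype F]
    (hc4 : Fintype.card F % 4 = 3) (v : F) (hv : v ≠ 0) :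
    IsSquare v ∨ IsSquare (-v) := by
  by_cases h : IsSquare v
  · exact Or.inl h
  · right
    have h1 : quadraticChar F v = -1 := quadraticChar_neg_one_iff_not_isSquare.mpr h
    have h2 : quadraticChar F (-1) = -1 :=
      quadraticChar_neg_one_iff_not_isSquare.mpr
        (fun hs => (FiniteField.isSquare_neg_one_iff.mp hs) hc4)
    have h3 : quadraticChar F (-v) = 1 := by
      rw [show (-v : F) = (-1) * v by ring, map_mul, h1, h2]; ring
    exact (quadraticChar_one_iff_isSquare (neg_ne_zero.mpr hv)).mp h3

/-- Let `q = 3^m` with `m` odd and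
`C = {(x, x²) : x ≠ 0} ∪ {(x, −x²) : x ≠ 0} ⊆ F_q²`.
Then `C` is a complete capset. -/
theorem two_conics_complete_capset (m : ℕ) (hm : 1 ≤ m) (hodd : Odd m)
    (F : Type) [Field F] [Fintype F] (hcard : Fintype.card F = 3 ^ m)
    (C : Set (F × F))
    (hC : C = {p : F × F | (∃ x : F, x ≠ 0 ∧ p = (x, x ^ 2)) ∨
      (∃ x : F, x ≠ 0 ∧ p = (x, -x ^ 2))}) :
    (∀ P ∈ C, ∀ Q ∈ C, ∀ R ∈ C,
      P ≠ Q → P ≠ R → Q ≠ R → P + Q + R ≠ 0) ∧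
    (∀ P : F × F, P ∉ C → ∃ Q ∈ C, ∃ R ∈ C, Q ≠ R ∧ P + Q + R = 0) := by
  have h3 : (3 : F) = 0 := by
    have hz : ((3 : F)) ^ m = 0 := by
      have := FiniteField.cast_card_eq_zero F
      rw [hcard] at this
      push_cast at this
      exact this
    exact pow_eq_zero_iff (by omega) |>.mp hz
  have h2ne : (2 : F) ≠ 0 := by
    intro h
    have : (1 : F) = 0 := by linear_combination h3 - h
    exact one_ne_zero this
  have hc4 : Fintype.card F % 4 = 3 := by
    obtain ⟨k, rfl⟩ := hodd
    rw [hcard]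
    have h9 : (9 : ℕ) ^ k % 4 = 1 := by rw [Nat.pow_mod]; norm_num
    have he : (3 : ℕ) ^ (2 * k + 1) = 9 ^ k * 3 := by
      rw [pow_add, pow_mul]; norm_num
    rw [he, Nat.mul_mod, h9]
  subst hC
  constructor
  · rintro P hP Q hQ R hR hPQ hPR hQR heq
    obtain ⟨h1, h2⟩ : P.1 + Q.1 + R.1 = 0 ∧ P.2 + Q.2 + R.2 = 0 := by
      constructor
      · have := congrArg Prod.fst heq; simpa using this
      · have := congrArg Prod.snd heq; simpa using this
    rcases hP with ⟨a, ha, rfl⟩ | ⟨a, ha, rfl⟩ <;>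
      rcases hQ with ⟨b, hb, rfl⟩ | ⟨b, hb, rfl⟩ <;>
        rcases hR with ⟨c, hc, rfl⟩ | ⟨c, hc, rfl⟩ <;>
          simp only at h1 h2
    -- (+,+,+)
    · have hab : (a - b) ^ 2 = 0 := by
        linear_combination -h2 + (c - a - b) * h1 + (a ^ 2 + b ^ 2) * h3
      have : a = b := sub_eq_zero.mp (pow_eq_zero_iff two_ne_zero |>.mp hab)
      exact hPQ (by rw [this])
    -- (+,+,-)
    · have : a * b = 0 := by
        linear_combination h2 + (c - a - b) * h1 + a * b * h3
      rcases mul_eq_zero.mp this with h | h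
      · exact ha h
      · exact hb h
    -- (+,-,+)
    · have : a * c = 0 := by
        linear_combination h2 + (b - a - c) * h1 + a * c * h3
      rcases mul_eq_zero.mp this with h | h
      · exact ha h
      · exact hc h
    -- (+,-,-)
    · have : b * c = 0 := by
        linear_combination -h2 + (a - b - c) * h1 + b * c * h3
      rcases mul_eq_zero.mp this with h | h
      · exact hb h
      · exact hc h
    -- (-,+,+)
    · have : b * c = 0 := by
        linear_combination h2 + (a - b - c) * h1 + b * c * h3
      rcases mul_eq_zero.mp this with h | h
      · exact hb h
      · exact hc h
    -- (-,+,-)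
    · have : a * c = 0 := by
        linear_combination -h2 + (b - a - c) * h1 + a * c * h3
      rcases mul_eq_zero.mp this with h | h
      · exact ha h
      · exact hc h
    -- (-,-,+)
    · have : a * b = 0 := by
        linear_combination -h2 + (c - a - b) * h1 + a * b * h3
      rcases mul_eq_zero.mp this with h | h
      · exact ha h
      · exact hb h
    -- (-,-,-)
    · have hab : (a - b) ^ 2 = 0 := by
        linear_combination h2 + (c - a - b) * h1 + (a ^ 2 + b ^ 2) * h3
      have : a = b := sub_eq_zero.mp (pow_eq_zero_iff two_ne_zero |>.mp hab)
      exact hPQ (by rw [this])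
  · rintro ⟨u, v⟩ hP
    simp only [Set.mem_setOf_eq, not_or, not_exists] at hP
    push_neg at hP
    obtain ⟨hP1, hP2⟩ := hP
    by_cases hu : u = 0
    · subst hu
      by_cases hv : v = 0
      · subst hv
        refine ⟨(1, 1), Or.inl ⟨1, one_ne_zero, by norm_num⟩,
          (-1, -1), Or.inr ⟨-1, by norm_num, by norm_num⟩, ?_, ?_⟩
        · intro h
          have : (1 : F) = -1 := congrArg Prod.fst h
          exact h2ne (by linear_combination this)
        · apply Prod.ext <;> simp
      · rcases aux_sq_dichotomy F hc4 v hv with ⟨a, hva⟩ | ⟨a, hva⟩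
        · have ha : a ≠ 0 := by rintro rfl; exact hv (by rw [hva]; ring)
          refine ⟨(a, a ^ 2), Or.inl ⟨a, ha, rfl⟩,
            (-a, (-a) ^ 2), Or.inl ⟨-a, neg_ne_zero.mpr ha, rfl⟩, ?_, ?_⟩
          · intro h
            have h' : a = -a := congrArg Prod.fst h
            have : (2 : F) * a = 0 := by linear_combination h'
            exact ha ((mul_eq_zero.mp this).resolve_left h2ne)
          · apply Prod.ext
            · show (0 : F) + a + -a = 0; ring
            · show v + a ^ 2 + (-a) ^ 2 = 0
              linear_combination (-2 : F) * hva + v * h3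
        · have ha : a ≠ 0 := by
            rintro rfl
            refine hv ?_
            have hz : -v = 0 := by rw [hva]; ring
            linear_combination -hz
          refine ⟨(a, -a ^ 2), Or.inr ⟨a, ha, rfl⟩,
            (-a, -(-a) ^ 2), Or.inr ⟨-a, neg_ne_zero.mpr ha, rfl⟩, ?_, ?_⟩
          · intro h
            have h' : a = -a := congrArg Prod.fst h
            have : (2 : F) * a = 0 := by linear_combination h'
            exact ha ((mul_eq_zero.mp this).resolve_left h2ne)
          · apply Prod.ext
            · show (0 : F) + a + -a = 0; ring
            · show v + -a ^ 2 + -(-a) ^ 2 = 0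
              linear_combination -hva - a ^ 2 * h3
    · have hv1 : v ≠ u ^ 2 := fun h => hP1 u hu (by rw [h])
      have hv2 : v ≠ -u ^ 2 := fun h => hP2 u hu (by rw [h])
      set a : F := (u ^ 2 - v) / u with hadef
      set b : F := (v + u ^ 2) / u with hbdef
      have ha : a ≠ 0 := div_ne_zero (sub_ne_zero.mpr (Ne.symm hv1)) hu
      have hb : b ≠ 0 := by
        apply div_ne_zero _ hu
        intro h
        exact hv2 (by linear_combination h)
      refine ⟨(a, a ^ 2), Or.inl ⟨a, ha, rfl⟩,
        (b, -b ^ 2), Or.inr ⟨b, hb, rfl⟩, ?_, ?_⟩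
      · intro h
        have h1' : a = b := congrArg Prod.fst h
        have h2' : a ^ 2 = -b ^ 2 := congrArg Prod.snd h
        have : (2 : F) * a ^ 2 = 0 := by linear_combination h2' + (a + b) * h1'
        have : a ^ 2 = 0 := (mul_eq_zero.mp this).resolve_left h2ne
        exact ha (pow_eq_zero_iff two_ne_zero |>.mp this)
      · apply Prod.ext
        · show u + a + b = 0
          rw [hadef, hbdef]
          field_simp
          linear_combination u ^ 2 * h3
        · show v + a ^ 2 + -b ^ 2 = 0
          rw [hadef, hbdef]
          field_simp
          linear_combination (-u ^ 2 * v) * h3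
end

section
/- Let C ⊆ F_3^k be a complete capset, and let C' = C × {0, 1} = {(v, t) : v ∈ C, t ∈ {0, 1}} ⊆ F_3^k × F_3 ≅ F_3^{k+1}. Then C' is a complete capset in F_3^{k+1}, and |C'| = 2|C|. -/
/-!
The third coordinate of a line in `C × {0, 1}` is a triple from `{0, 1}` summing to `0` in `F_3`,
and the only such triples are constant; so the line lies in a single layer `C × {t}` and comes
from a line in `C`. For completeness, a point `(v, t)` outside `C × {0, 1}` either has `v ∉ C`,
and a line of `C` through `v` lifts since every `t` is `-(a + b)` with `a, b ∈ {0, 1}`, or has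
`v ∈ C` and `t = 2`, and then `(v, 0), (v, 1), (v, 2)` is the vertical line through it.
-/

section Capset

variable {V : Type*} [AddCommGroup V]

def IsCapset (C : Set V) : Prop :=
  ∀ P ∈ C, ∀ Q ∈ C, ∀ R ∈ C, P ≠ Q → P ≠ R → Q ≠ R → P + Q + R ≠ 0

def IsCompleteCapset (C : Set V) : Prop :=
  IsCapset C ∧ ∀ P, P ∉ C → ∃ Q ∈ C, ∃ R ∈ C, Q ≠ R ∧ P + Q + R = 0

lemma ZMod.eq_and_eq_of_add_add_eq_zero {a b c : ZMod 3}
    (ha : a ∈ ({0, 1} : Set (ZMod 3))) (hb : b ∈ ({0, 1} : Set (ZMod 3)))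
    (hc : c ∈ ({0, 1} : Set (ZMod 3))) (h : a + b + c = 0) : a = b ∧ b = c := by
  simp only [Set.mem_insert_iff, Set.mem_singleton_iff] at ha hb hc
  rcases ha with rfl | rfl <;> rcases hb with rfl | rfl <;> rcases hc with rfl | rfl <;>
    revert h <;> decide

lemma ZMod.exists_add_add_eq_zero (t : ZMod 3) :
    ∃ a ∈ ({0, 1} : Set (ZMod 3)), ∃ b ∈ ({0, 1} : Set (ZMod 3)), t + a + b = 0 := by
  fin_cases t
  exacts [⟨0, by simp, 0, by simp, rfl⟩, ⟨1, by simp, 1, by simp, rfl⟩,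
    ⟨0, by simp, 1, by simp, rfl⟩]

lemma IsCapset.prod_zero_one {C : Set V} (hC : IsCapset C) :
    IsCapset (C ×ˢ ({0, 1} : Set (ZMod 3))) := by
  rintro P ⟨hP, hP₂⟩ Q ⟨hQ, hQ₂⟩ R ⟨hR, hR₂⟩ hPQ hPR hQR hsum
  obtain ⟨hPQ₂, hQR₂⟩ :=
    ZMod.eq_and_eq_of_add_add_eq_zero hP₂ hQ₂ hR₂ (congrArg Prod.snd hsum)
  exact hC P.1 hP Q.1 hQ R.1 hR (fun h ↦ hPQ (Prod.ext h hPQ₂))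
    (fun h ↦ hPR (Prod.ext h (hPQ₂.trans hQR₂))) (fun h ↦ hQR (Prod.ext h hQR₂))
    (congrArg Prod.fst hsum)

lemma add_add_self_eq_zero [Module (ZMod 3) V] (v : V) : v + v + v = 0 := by
  rw [← two_nsmul, ← succ_nsmul, ← Nat.cast_smul_eq_nsmul (ZMod 3)]
  exact (ZMod.natCast_self 3).symm ▸ zero_smul _ v

lemma IsCompleteCapset.prod_zero_one [Module (ZMod 3) V] {C : Set V}
    (hC : IsCompleteCapset C) : IsCompleteCapset (C ×ˢ ({0, 1} : Set (ZMod 3))) := by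
  refine ⟨hC.1.prod_zero_one, ?_⟩
  rintro ⟨v, t⟩ hvt
  by_cases hv : v ∈ C
  · have ht : t = 2 := by
      simp only [Set.mem_prod, hv, Set.mem_insert_iff, Set.mem_singleton_iff, true_and,
        not_or] at hvt
      revert t; decide
    subst ht
    exact ⟨(v, 0), ⟨hv, by simp⟩, (v, 1), ⟨hv, by simp⟩, by simp,
      Prod.ext (add_add_self_eq_zero v) (show (2 + 0 + 1 : ZMod 3) = 0 by decide)⟩
  · obtain ⟨Q, hQ, R, hR, hQR, hsum⟩ := hC.2 v hv
    obtain ⟨a, ha, b, hb, hab⟩ := ZMod.exists_add_add_eq_zero t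
    exact ⟨(Q, a), ⟨hQ, ha⟩, (R, b), ⟨hR, hb⟩, fun h ↦ hQR (congrArg Prod.fst h),
      Prod.ext hsum hab⟩

end Capset

/-- Let `C ⊆ F_3^k` be a complete capset and `C' = C × {0, 1} ⊆ F_3^k × F_3`.
Then `C'` is a complete capset in `F_3^{k+1}` and `|C'| = 2|C|`. -/
theorem product_complete_capset (k : ℕ) (C : Set (Fin k → ZMod 3))
    (hcap : ∀ P ∈ C, ∀ Q ∈ C, ∀ R ∈ C,
      P ≠ Q → P ≠ R → Q ≠ R → P + Q + R ≠ 0)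
    (hcomplete : ∀ P : Fin k → ZMod 3, P ∉ C →
      ∃ Q ∈ C, ∃ R ∈ C, Q ≠ R ∧ P + Q + R = 0)
    (C' : Set ((Fin k → ZMod 3) × ZMod 3))
    (hC' : C' = {p : (Fin k → ZMod 3) × ZMod 3 |
      p.1 ∈ C ∧ (p.2 = 0 ∨ p.2 = 1)}) :
    (∀ P ∈ C', ∀ Q ∈ C', ∀ R ∈ C',
      P ≠ Q → P ≠ R → Q ≠ R → P + Q + R ≠ 0) ∧
    (∀ P : (Fin k → ZMod 3) × ZMod 3, P ∉ C' →
      ∃ Q ∈ C', ∃ R ∈ C', Q ≠ R ∧ P + Q + R = 0) ∧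
    C'.ncard = 2 * C.ncard := by
  have hC'_prod : C' = C ×ˢ ({0, 1} : Set (ZMod 3)) := by
    ext p
    simp [hC']
  obtain ⟨hcap', hcomplete'⟩ :=
    hC'_prod ▸ IsCompleteCapset.prod_zero_one (C := C) ⟨hcap, hcomplete⟩
  refine ⟨hcap', hcomplete', ?_⟩
  rw [hC'_prod, Set.ncard_prod, Set.ncard_pair (by decide), mul_comm]
end

section
/- Let q = 3^m and suppose P_i = (x_i, c_i x_i²) ∈ F_q² for i = 1, 2, 3, where all x_i and c_i are nonzero and the three points P_1, P_2, P_3 are pairwise distinct. If P_1 + P_2 + P_3 = 0, then −(c_1 c_2 + c_1 c_3 + c_2 c_3) is a square in F_q, i.e. there exists y ∈ F_q with y² = −(c_1 c_2 + c_1 c_3 + c_2 c_3). -/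
/-- Let `q = 3^m` and `P_i = (x_i, c_i x_i²) ∈ F_q²` for `i = 1, 2, 3`, with all
`x_i, c_i` nonzero and the points pairwise distinct. If `P_1 + P_2 + P_3 = 0`,
then `−(c_1 c_2 + c_1 c_3 + c_2 c_3)` is a square in `F_q`. -/
theorem collinear_parabola_points_square (m : ℕ) (hm : 1 ≤ m)
    (F : Type) [Field F] [Fintype F] (hcard : Fintype.card F = 3 ^ m)
    (x₁ x₂ x₃ c₁ c₂ c₃ : F)
    (hx₁ : x₁ ≠ 0) (hx₂ : x₂ ≠ 0) (hx₃ : x₃ ≠ 0)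
    (hc₁ : c₁ ≠ 0) (hc₂ : c₂ ≠ 0) (hc₃ : c₃ ≠ 0)
    (h12 : (x₁, c₁ * x₁ ^ 2) ≠ (x₂, c₂ * x₂ ^ 2))
    (h13 : (x₁, c₁ * x₁ ^ 2) ≠ (x₃, c₃ * x₃ ^ 2))
    (h23 : (x₂, c₂ * x₂ ^ 2) ≠ (x₃, c₃ * x₃ ^ 2))
    (hsum : (x₁, c₁ * x₁ ^ 2) + (x₂, c₂ * x₂ ^ 2) + (x₃, c₃ * x₃ ^ 2) = 0) :
    ∃ y : F, y ^ 2 = -(c₁ * c₂ + c₁ * c₃ + c₂ * c₃) := by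
  have h1 : x₁ + x₂ + x₃ = 0 := by
    have := congrArg Prod.fst hsum; simpa using this
  have h2 : c₁ * x₁ ^ 2 + c₂ * x₂ ^ 2 + c₃ * x₃ ^ 2 = 0 := by
    have := congrArg Prod.snd hsum; simpa using this
  have hx3 : x₃ = -x₁ - x₂ := by linear_combination h1
  subst hx3
  refine ⟨-((c₁ + c₃) * x₁ + c₃ * x₂) * x₂⁻¹, ?_⟩
  field_simp
  linear_combination (c₁ + c₃) * h2
end

section
/- Let q = 3^m with m odd, and let a, b, c ∈ F_q be pairwise distinct nonzero elements. Then the set {(x, ax²) : x ∈ F_q, x ≠ 0} ∪ {(x, bx²) : x ∈ F_q, x ≠ 0} ∪ {(x, cx²) : x ∈ F_q, x ≠ 0} ⊆ F_q² is not a capset: there exist three distinct points P, Q, R in this set with P + Q + R = 0. -/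
section Aux
variable {F : Type} [Field F] [Fintype F]

/-- Core construction: two points on parabola `u`, one on parabola `v`. -/
lemma core3 (h3 : (3:F) = 0) (u v : F) (hu : u ≠ 0) (hv : v ≠ 0) (huv : u ≠ v)
    (hs : u + v ≠ 0) (d : F) (hd : d * d = v * v - (u + v) * (u + v)) :
    ∃ x y z : F, x ≠ 0 ∧ y ≠ 0 ∧ z ≠ 0 ∧ x ≠ y ∧ x + y + z = 0 ∧
      u * x ^ 2 + u * y ^ 2 + v * z ^ 2 = 0 := by
  have h2 : (2:F) ≠ 0 := fun h => one_ne_zero (α := F) (by linear_combination h3 - h)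
  refine ⟨-(v + d), u + v, d - u, ?_, hs, ?_, ?_, by ring, by linear_combination (u + v) * hd⟩
  · intro h
    have hvd : v + d = 0 := by linear_combination -h
    have hss : (u + v) * (u + v) = 0 := by linear_combination hd + (v - d) * hvd
    exact hs (by simpa using mul_self_eq_zero.mp hss)
  · intro h
    have key : (u + v) * (2 * u) = 0 := by linear_combination hd - (d + u) * h
    rcases mul_eq_zero.mp key with h' | h'
    · exact hs h'
    · exact hu (by rcases mul_eq_zero.mp h' with h'' | h'' <;> [exact absurd h'' h2; exact h''])
  · intro h
    have hdval : d = -(u + 2 * v) := by linear_combination -h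
    have key : (u + v) * (2 * (u + 2 * v)) = 0 := by
      rw [hdval] at hd; linear_combination hd
    rcases mul_eq_zero.mp key with h' | h'
    · exact hs h'
    · rcases mul_eq_zero.mp h' with h'' | h''
      · exact h2 h''
      · exact huv (by linear_combination h'' - v * h3)

/-- Points version. -/
lemma pair_core (h3 : (3:F) = 0) (u v : F) (hu : u ≠ 0) (hv : v ≠ 0) (huv : u ≠ v)
    (hs : u + v ≠ 0) (hsq : IsSquare (v * v - (u + v) * (u + v))) :
    ∃ P Q R : F × F,
      (∃ x : F, x ≠ 0 ∧ P = (x, u * x ^ 2)) ∧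
      (∃ x : F, x ≠ 0 ∧ Q = (x, u * x ^ 2)) ∧
      (∃ x : F, x ≠ 0 ∧ R = (x, v * x ^ 2)) ∧
      P ≠ Q ∧ P ≠ R ∧ Q ≠ R ∧ P + Q + R = 0 := by
  obtain ⟨d, hd⟩ := hsq
  obtain ⟨x, y, z, hx, hy, hz, hxy, hsum, hquad⟩ := core3 h3 u v hu hv huv hs d hd.symm
  refine ⟨(x, u * x ^ 2), (y, u * y ^ 2), (z, v * z ^ 2), ⟨x, hx, rfl⟩, ⟨y, hy, rfl⟩,
    ⟨z, hz, rfl⟩, ?_, ?_, ?_, ?_⟩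
  · exact fun h => hxy (congrArg Prod.fst h)
  · intro h
    have h1 : x = z := congrArg Prod.fst h
    have h2 : u * x ^ 2 = v * z ^ 2 := congrArg Prod.snd h
    rw [← h1] at h2
    exact huv (mul_right_cancel₀ (pow_ne_zero 2 hx) h2)
  · intro h
    have h1 : y = z := congrArg Prod.fst h
    have h2 : u * y ^ 2 = v * z ^ 2 := congrArg Prod.snd h
    rw [← h1] at h2
    exact huv (mul_right_cancel₀ (pow_ne_zero 2 hy) h2)
  · exact Prod.ext (by simpa using hsum) (by simpa using hquad)

lemma notsq_or (A B : F) (hA : A ≠ 0) (hB : B ≠ 0) (hAB : ¬ IsSquare (A * B)) :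
    IsSquare A ∨ IsSquare B := by
  classical
  by_contra h
  push_neg at h
  apply hAB
  have c1 : quadraticChar F A = -1 := quadraticChar_neg_one_iff_not_isSquare.mpr h.1
  have c2 : quadraticChar F B = -1 := quadraticChar_neg_one_iff_not_isSquare.mpr h.2
  have : quadraticChar F (A * B) = 1 := by rw [map_mul, c1, c2]; ring
  exact (quadraticChar_one_iff_isSquare (mul_ne_zero hA hB)).mp this

lemma isq_of_mul_sq {x t : F} (ht : t ≠ 0) (h : IsSquare (x * (t * t))) : IsSquare x := by
  obtain ⟨r, hr⟩ := h
  exact ⟨r * t⁻¹, by field_simp; linear_combination hr⟩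

/-- Given a pair u v with -(uv) a nonsquare, find the triple on the two parabolas. -/
lemma glue (h3 : (3:F) = 0) (u v : F) (hu : u ≠ 0) (hv : v ≠ 0) (huv : u ≠ v)
    (hns : ¬ IsSquare (-(u * v))) :
    ∃ P Q R : F × F,
      ((∃ x : F, x ≠ 0 ∧ P = (x, u * x ^ 2)) ∨ (∃ x : F, x ≠ 0 ∧ P = (x, v * x ^ 2))) ∧
      ((∃ x : F, x ≠ 0 ∧ Q = (x, u * x ^ 2)) ∨ (∃ x : F, x ≠ 0 ∧ Q = (x, v * x ^ 2))) ∧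
      ((∃ x : F, x ≠ 0 ∧ R = (x, u * x ^ 2)) ∨ (∃ x : F, x ≠ 0 ∧ R = (x, v * x ^ 2))) ∧
      P ≠ Q ∧ P ≠ R ∧ Q ≠ R ∧ P + Q + R = 0 := by
  have hs : u + v ≠ 0 := by
    intro h
    exact hns ⟨u, by linear_combination -u * h⟩
  set A : F := v * v - (u + v) * (u + v) with hAdef
  set B : F := u * u - (u + v) * (u + v) with hBdef
  have hA : A ≠ 0 := by
    intro h
    have key : u * (u + 2 * v) = 0 := by rw [hAdef] at h; linear_combination -h
    rcases mul_eq_zero.mp key with h' | h'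
    · exact hu h'
    · exact huv (by linear_combination h' - v * h3)
  have hB : B ≠ 0 := by
    intro h
    have key : v * (v + 2 * u) = 0 := by rw [hBdef] at h; linear_combination -h
    rcases mul_eq_zero.mp key with h' | h'
    · exact hv h'
    · exact huv (by linear_combination -h' + u * h3)
  have hABns : ¬ IsSquare (A * B) := by
    intro h
    apply hns
    apply isq_of_mul_sq (t := u - v) (sub_ne_zero.mpr huv)
    have : A * B = -(u * v) * ((u - v) * (u - v)) := by
      rw [hAdef, hBdef]; linear_combination (u^3*v + u^2*v^2 + u*v^3) * h3
    rwa [this] at h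
  rcases notsq_or A B hA hB hABns with hsq | hsq
  · obtain ⟨P, Q, R, hP, hQ, hR, h1, h2, h3', h4⟩ := pair_core h3 u v hu hv huv hs hsq
    exact ⟨P, Q, R, Or.inl hP, Or.inl hQ, Or.inr hR, h1, h2, h3', h4⟩
  · have hsq' : IsSquare (u * u - (v + u) * (v + u)) := by rwa [add_comm v u]
    obtain ⟨P, Q, R, hP, hQ, hR, h1, h2, h3', h4⟩ :=
      pair_core h3 v u hv hu (Ne.symm huv) (by rwa [add_comm v u]) hsq'
    exact ⟨P, Q, R, Or.inr hP, Or.inr hQ, Or.inl hR, h1, h2, h3', h4⟩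

end Aux

/-- Let `q = 3^m` with `m` odd and `a, b, c ∈ F_q` pairwise distinct and nonzero.
Then the union of the three punctured parabolas `{(x, ax²)}, {(x, bx²)}, {(x, cx²)}`
(for `x ≠ 0`) is not a capset. -/
theorem three_parabolas_not_capset (m : ℕ) (hm : 1 ≤ m) (hodd : Odd m)
    (F : Type) [Field F] [Fintype F] (hcard : Fintype.card F = 3 ^ m)
    (a b c : F) (ha : a ≠ 0) (hb : b ≠ 0) (hc : c ≠ 0)
    (hab : a ≠ b) (hac : a ≠ c) (hbc : b ≠ c)
    (S : Set (F × F))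
    (hS : S = {p : F × F | (∃ x : F, x ≠ 0 ∧ p = (x, a * x ^ 2)) ∨
      (∃ x : F, x ≠ 0 ∧ p = (x, b * x ^ 2)) ∨
      (∃ x : F, x ≠ 0 ∧ p = (x, c * x ^ 2))}) :
    ∃ P ∈ S, ∃ Q ∈ S, ∃ R ∈ S,
      P ≠ Q ∧ P ≠ R ∧ Q ≠ R ∧ P + Q + R = 0 := by
  subst hS
  -- characteristic 3
  have h3 : (3 : F) = 0 := by
    obtain ⟨n, hp, hcard'⟩ := FiniteField.card F (ringChar F)
    have hdvd : ringChar F ∣ 3 ^ m := by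
      rw [← hcard, hcard']
      exact dvd_pow_self _ n.pos.ne'
    have h33 : ringChar F = 3 :=
      (Nat.prime_dvd_prime_iff_eq hp (by norm_num)).mp (hp.dvd_of_dvd_pow hdvd)
    have := ringChar.Nat.cast_ringChar (R := F)
    rw [h33] at this
    exact_mod_cast this
  -- card ≡ 3 mod 4
  have hmod : Fintype.card F % 4 = 3 := by
    obtain ⟨k, hk⟩ := hodd
    subst hk
    rw [hcard, pow_succ, pow_mul, Nat.mul_mod, Nat.pow_mod]
    norm_num
  have hm1 : ¬ IsSquare (-1 : F) := fun h => FiniteField.isSquare_neg_one_iff.mp h hmod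
  -- one of the three pair products is a nonsquare
  have htri : ¬IsSquare (-(a * b)) ∨ ¬IsSquare (-(a * c)) ∨ ¬IsSquare (-(b * c)) := by
    by_contra h
    push_neg at h
    obtain ⟨h1, h2, h3'⟩ := h
    apply hm1
    have habc : a * b * c ≠ 0 := mul_ne_zero (mul_ne_zero ha hb) hc
    have key : (-1 : F) = (-(a * b)) * (-(a * c)) * (-(b * c)) *
        ((a * b * c)⁻¹ * (a * b * c)⁻¹) := by
      field_simp
    rw [key]
    exact ((h1.mul h2).mul h3').mul ⟨_, rfl⟩
  rcases htri with hns | hns | hns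
  · obtain ⟨P, Q, R, hP, hQ, hR, h1, h2, h3', h4⟩ := glue h3 a b ha hb hab hns
    exact ⟨P, Or.imp id Or.inl hP, Q, Or.imp id Or.inl hQ, R, Or.imp id Or.inl hR,
      h1, h2, h3', h4⟩
  · obtain ⟨P, Q, R, hP, hQ, hR, h1, h2, h3', h4⟩ := glue h3 a c ha hc hac hns
    exact ⟨P, Or.imp id Or.inr hP, Q, Or.imp id Or.inr hQ, R, Or.imp id Or.inr hR,
      h1, h2, h3', h4⟩
  · obtain ⟨P, Q, R, hP, hQ, hR, h1, h2, h3', h4⟩ := glue h3 b c hb hc hbc hns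
    exact ⟨P, Or.inr hP, Q, Or.inr hQ, R, Or.inr hR, h1, h2, h3', h4⟩
end

section
/- Let q = 3^m with m odd, and let a, b, c ∈ F_q be pairwise distinct nonzero elements. Then it is not the case that all six of the elements ab − a², ab − b², ac − a², ac − c², bc − b², bc − c² are non-squares in F_q; that is, at least one of these six elements is a (nonzero) square. -/
/-- Let `q = 3^m` with `m` odd and `a, b, c ∈ F_q` pairwise distinct and nonzero.
Then at least one of `ab − a², ab − b², ac − a², ac − c², bc − b², bc − c²`
is a square in `F_q`. -/
theorem one_of_six_is_square (m : ℕ) (hm : 1 ≤ m) (hodd : Odd m)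
    (F : Type) [Field F] [Fintype F] (hcard : Fintype.card F = 3 ^ m)
    (a b c : F) (ha : a ≠ 0) (hb : b ≠ 0) (hc : c ≠ 0)
    (hab : a ≠ b) (hac : a ≠ c) (hbc : b ≠ c) :
    (∃ y : F, y ^ 2 = a * b - a ^ 2) ∨
    (∃ y : F, y ^ 2 = a * b - b ^ 2) ∨
    (∃ y : F, y ^ 2 = a * c - a ^ 2) ∨
    (∃ y : F, y ^ 2 = a * c - c ^ 2) ∨
    (∃ y : F, y ^ 2 = b * c - b ^ 2) ∨
    (∃ y : F, y ^ 2 = b * c - c ^ 2) := by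
  classical
  by_contra h
  push_neg at h
  obtain ⟨h1, h2, h3, h4, h5, h6⟩ := h
  -- convert to ¬ IsSquare
  have ns : ∀ x : F, (∀ y : F, y ^ 2 ≠ x) → ¬ IsSquare x := by
    rintro x hx ⟨r, hr⟩
    exact hx r (by rw [sq, ← hr])
  -- card mod 4 = 3
  have hcard4 : Fintype.card F % 4 = 3 := by
    obtain ⟨k, rfl⟩ := hodd
    rw [hcard, pow_succ, pow_mul]
    rw [Nat.mul_mod, Nat.pow_mod]
    norm_num
  have hneg1 : ¬ IsSquare (-1 : F) := by
    rw [FiniteField.isSquare_neg_one_iff, hcard4]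
    simp
  -- nonzero facts
  have d1 : a * b - a ^ 2 ≠ 0 := by
    have : a * b - a ^ 2 = a * (b - a) := by ring
    rw [this]
    exact mul_ne_zero ha (sub_ne_zero.mpr (Ne.symm hab))
  have d2 : a * b - b ^ 2 ≠ 0 := by
    have : a * b - b ^ 2 = b * (a - b) := by ring
    rw [this]
    exact mul_ne_zero hb (sub_ne_zero.mpr hab)
  have d3 : a * c - a ^ 2 ≠ 0 := by
    have : a * c - a ^ 2 = a * (c - a) := by ring
    rw [this]
    exact mul_ne_zero ha (sub_ne_zero.mpr (Ne.symm hac))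
  have d4 : a * c - c ^ 2 ≠ 0 := by
    have : a * c - c ^ 2 = c * (a - c) := by ring
    rw [this]
    exact mul_ne_zero hc (sub_ne_zero.mpr hac)
  have d5 : b * c - b ^ 2 ≠ 0 := by
    have : b * c - b ^ 2 = b * (c - b) := by ring
    rw [this]
    exact mul_ne_zero hb (sub_ne_zero.mpr (Ne.symm hbc))
  have d6 : b * c - c ^ 2 ≠ 0 := by
    have : b * c - c ^ 2 = c * (b - c) := by ring
    rw [this]
    exact mul_ne_zero hc (sub_ne_zero.mpr hbc)
  set χ := quadraticChar F with hχ
  have c1 : χ (a * b - a ^ 2) = -1 := quadraticChar_neg_one_iff_not_isSquare.mpr (ns _ h1)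
  have c2 : χ (a * b - b ^ 2) = -1 := quadraticChar_neg_one_iff_not_isSquare.mpr (ns _ h2)
  have c3 : χ (a * c - a ^ 2) = -1 := quadraticChar_neg_one_iff_not_isSquare.mpr (ns _ h3)
  have c4 : χ (a * c - c ^ 2) = -1 := quadraticChar_neg_one_iff_not_isSquare.mpr (ns _ h4)
  have c5 : χ (b * c - b ^ 2) = -1 := quadraticChar_neg_one_iff_not_isSquare.mpr (ns _ h5)
  have c6 : χ (b * c - c ^ 2) = -1 := quadraticChar_neg_one_iff_not_isSquare.mpr (ns _ h6)
  -- the product of the six elements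
  have hprodeq : (a * b - a ^ 2) * (a * b - b ^ 2) * (a * c - a ^ 2) * (a * c - c ^ 2) *
      (b * c - b ^ 2) * (b * c - c ^ 2)
      = (-1) * ((a * b * c) * (a - b) * (a - c) * (b - c)) ^ 2 := by ring
  have htne : ((a * b * c) * (a - b) * (a - c) * (b - c)) ≠ 0 := by
    apply mul_ne_zero
    apply mul_ne_zero
    apply mul_ne_zero
    exact mul_ne_zero (mul_ne_zero ha hb) hc
    · exact sub_ne_zero.mpr hab
    · exact sub_ne_zero.mpr hac
    · exact sub_ne_zero.mpr hbc
  have hχprod : χ ((a * b - a ^ 2) * (a * b - b ^ 2) * (a * c - a ^ 2) * (a * c - c ^ 2) *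
      (b * c - b ^ 2) * (b * c - c ^ 2)) = 1 := by
    rw [map_mul, map_mul, map_mul, map_mul, map_mul, c1, c2, c3, c4, c5, c6]
    norm_num
  rw [hprodeq, map_mul, map_pow] at hχprod
  have hsq1 : χ ((a * b * c) * (a - b) * (a - c) * (b - c)) ^ 2 = 1 := by
    rcases quadraticChar_dichotomy htne with h | h <;> rw [h] <;> norm_num
  rw [hsq1, mul_one] at hχprod
  have : IsSquare (-1 : F) :=
    (quadraticChar_one_iff_isSquare (neg_ne_zero.mpr one_ne_zero)).mp hχprod
  exact hneg1 this
end

section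
/- Let q = 3^m with m even, let a ∈ F_q be nonzero, and let 1 ≤ i ≤ m − 1. Then a² − a^{3^i + 1} is a square in F_q if and only if a² − a^{3^{m−i} + 1} is a square in F_q. -/
lemma sq_mul_isSquare_iff {F : Type} [Field F] {u : F} (hu : u ≠ 0) (z : F) :
    IsSquare (u ^ 2 * z) ↔ IsSquare z := by
  constructor
  · intro h
    have hz : z = (u⁻¹) ^ 2 * (u ^ 2 * z) := by field_simp
    rw [hz]
    exact IsSquare.mul ⟨u⁻¹, pow_two u⁻¹⟩ h
  · rintro ⟨r, rfl⟩
    exact ⟨u * r, by ring⟩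

lemma isSquare_pow_odd_iff {F : Type} [Field F] (z : F) (t : ℕ) :
    IsSquare (z ^ (2 * t + 1)) ↔ IsSquare z := by
  rcases eq_or_ne z 0 with rfl | hz
  · simp
  · have h : z ^ (2 * t + 1) = (z ^ t) ^ 2 * z := by ring
    rw [h]
    exact sq_mul_isSquare_iff (pow_ne_zero _ hz) z

/-- Let `q = 3^m` with `m` even, `a ∈ F_q` nonzero, and `1 ≤ i ≤ m − 1`.
Then `a² − a^{3^i + 1}` is a square in `F_q` iff `a² − a^{3^{m−i} + 1}` is. -/
theorem square_symmetry (m : ℕ) (hm : 2 ≤ m) (heven : Even m)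
    (F : Type) [Field F] [Fintype F] (hcard : Fintype.card F = 3 ^ m)
    (a : F) (ha : a ≠ 0) (i : ℕ) (hi1 : 1 ≤ i) (hi2 : i ≤ m - 1) :
    (∃ y : F, y ^ 2 = a ^ 2 - a ^ (3 ^ i + 1)) ↔
    (∃ y : F, y ^ 2 = a ^ 2 - a ^ (3 ^ (m - i) + 1)) := by
  -- characteristic 3
  have hp : (ringChar F).Prime := CharP.char_is_prime F _
  obtain ⟨n, hpr, hcard'⟩ := FiniteField.card F (ringChar F)
  have hchar3 : ringChar F = 3 := by
    have hdvd : ringChar F ∣ 3 ^ m := by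
      rw [← hcard, hcard']; exact dvd_pow_self _ (by positivity)
    have := hp.dvd_of_dvd_pow hdvd
    exact (Nat.prime_dvd_prime_iff_eq hp (by norm_num)).mp this
  haveI : CharP F 3 := hchar3 ▸ ringChar.charP F
  haveI : Fact (Nat.Prime 3) := ⟨by norm_num⟩
  -- -1 is a square
  have hneg1 : IsSquare (-1 : F) := by
    rw [FiniteField.isSquare_neg_one_iff, hcard]
    obtain ⟨k, hk⟩ := heven
    subst hk
    have : 3 ^ (k + k) % 4 = 1 := by
      rw [Nat.pow_mod]
      have : 3 % 4 = 3 := by norm_num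
      rw [this, ← two_mul, pow_mul]
      norm_num [Nat.pow_mod]
    omega
  obtain ⟨r, hr⟩ := hneg1
  have hrne : r ≠ 0 := by
    intro h; rw [h, mul_zero] at hr; exact absurd hr (by norm_num)
  -- odd powers of 3
  have hodd : ∀ k : ℕ, 3 ^ k = 2 * ((3 ^ k - 1) / 2) + 1 := by
    intro k
    have : Odd (3 ^ k) := Odd.pow ⟨1, by norm_num⟩
    obtain ⟨c, hc⟩ := this
    omega
  set A := a ^ 2 - a ^ (3 ^ i + 1) with hA
  set B := a ^ 2 - a ^ (3 ^ (m - i) + 1) with hB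
  have key : B ^ 3 ^ i = (r * a ^ ((3 ^ i - 1) / 2)) ^ 2 * A := by
    rw [hB, sub_pow_char_pow, ← pow_mul, ← pow_mul]
    have h1 : (3 ^ (m - i) + 1) * 3 ^ i = 3 ^ m + 3 ^ i := by
      rw [add_mul, one_mul, ← pow_add]
      congr 2
      omega
    rw [h1, pow_add, ← hcard, FiniteField.pow_card]
    have h2 : a ^ ((3 ^ i - 1) / 2) * a ^ ((3 ^ i - 1) / 2) = a ^ (3 ^ i - 1) := by
      rw [← pow_add]
      congr 1
      have := hodd i
      omega
    have h3 : a ^ (3 ^ i - 1) * a ^ 2 = a ^ (3 ^ i + 1) := by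
      rw [← pow_add]; congr 1
      have : 1 ≤ 3 ^ i := Nat.one_le_pow _ _ (by norm_num)
      omega
    have h4 : a ^ (3 ^ i - 1) * a ^ (3 ^ i + 1) = a ^ (2 * 3 ^ i) := by
      rw [← pow_add]; congr 1
      have : 1 ≤ 3 ^ i := Nat.one_le_pow _ _ (by norm_num)
      omega
    calc a ^ (2 * 3 ^ i) - a * a ^ 3 ^ i
        = (r * r) * (a ^ (3 ^ i - 1) * a ^ 2) - (r * r) * (a ^ (3 ^ i - 1) * a ^ (3 ^ i + 1)) := by
          rw [← hr, h3, h4]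
          ring_nf
      _ = (r * a ^ ((3 ^ i - 1) / 2)) ^ 2 * A := by
          rw [hA]
          have : (r * a ^ ((3 ^ i - 1) / 2)) ^ 2 = (r * r) * a ^ (3 ^ i - 1) := by
            rw [← h2]; ring
          rw [this]; ring
  have hune : r * a ^ ((3 ^ i - 1) / 2) ≠ 0 := mul_ne_zero hrne (pow_ne_zero _ ha)
  have hArewrite : (∃ y : F, y ^ 2 = A) ↔ IsSquare A := by
    constructor
    · rintro ⟨y, hy⟩; exact ⟨y, by rw [← hy]; ring⟩
    · rintro ⟨y, hy⟩; exact ⟨y, by rw [hy]; ring⟩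
  have hBrewrite : (∃ y : F, y ^ 2 = B) ↔ IsSquare B := by
    constructor
    · rintro ⟨y, hy⟩; exact ⟨y, by rw [← hy]; ring⟩
    · rintro ⟨y, hy⟩; exact ⟨y, by rw [hy]; ring⟩
  rw [hArewrite, hBrewrite]
  have hBpow : IsSquare B ↔ IsSquare (B ^ 3 ^ i) := by
    conv_lhs => rw [← isSquare_pow_odd_iff B ((3 ^ i - 1) / 2)]
    rw [← hodd i]
  rw [hBpow, key]
  exact (sq_mul_isSquare_iff hune A).symm
end

section
/- Let q = 3^m, let λ ∈ F_q be a non-square, and let Q = {(x, y, x² − λy²) : x, y ∈ F_q} ⊆ F_q³. Then Q is a capset: there are no three distinct points P_1, P_2, P_3 ∈ Q with P_1 + P_2 + P_3 = 0. -/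
/-- Let `q = 3^m`, `λ ∈ F_q` a non-square, and
`Q = {(x, y, x² − λy²) : x, y ∈ F_q} ⊆ F_q³`. Then `Q` is a capset. -/
theorem paraboloid_capset (m : ℕ) (hm : 1 ≤ m)
    (F : Type) [Field F] [Fintype F] (hcard : Fintype.card F = 3 ^ m)
    (l : F) (hl : ¬∃ y : F, y ^ 2 = l)
    (Q : Set (F × F × F))
    (hQ : Q = {p : F × F × F | ∃ x y : F, p = (x, y, x ^ 2 - l * y ^ 2)}) :
    ∀ P₁ ∈ Q, ∀ P₂ ∈ Q, ∀ P₃ ∈ Q,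
      P₁ ≠ P₂ → P₁ ≠ P₃ → P₂ ≠ P₃ → P₁ + P₂ + P₃ ≠ 0 := by
  -- First, the characteristic of F is 3
  haveI : CharP F (ringChar F) := ringChar.charP F
  have hp : (ringChar F).Prime := CharP.char_is_prime F (ringChar F)
  obtain ⟨n, hn⟩ := FiniteField.card F (ringChar F)
  have hchar : ringChar F = 3 := by
    have h3 : (3 : ℕ) ∣ ringChar F ^ (n : ℕ) := by
      rw [← hn.2, hcard]
      exact dvd_pow_self 3 (Nat.one_le_iff_ne_zero.mp hm)
    have := (Nat.Prime.dvd_of_dvd_pow Nat.prime_three h3)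
    exact ((Nat.prime_dvd_prime_iff_eq Nat.prime_three hp).mp this).symm
  have h3 : (3 : F) = 0 := by
    have := CharP.cast_eq_zero F (ringChar F)
    rwa [hchar] at this
  subst hQ
  rintro P₁ h₁ P₂ h₂ P₃ h₃ h12 h13 h23 hsum
  obtain ⟨x₁, y₁, rfl⟩ := h₁
  obtain ⟨x₂, y₂, rfl⟩ := h₂
  obtain ⟨x₃, y₃, rfl⟩ := h₃
  have e1 : x₁ + x₂ + x₃ = 0 := congrArg Prod.fst hsum
  have e2 : y₁ + y₂ + y₃ = 0 := congrArg (fun p => p.2.1) hsum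
  have e3 : (x₁ ^ 2 - l * y₁ ^ 2) + (x₂ ^ 2 - l * y₂ ^ 2) + (x₃ ^ 2 - l * y₃ ^ 2) = 0 :=
    congrArg (fun p => p.2.2) hsum
  have hx3 : x₃ = -x₁ - x₂ := by linear_combination e1
  have hy3 : y₃ = -y₁ - y₂ := by linear_combination e2
  subst hx3 hy3
  have key : (x₁ - x₂) ^ 2 = l * (y₁ - y₂) ^ 2 := by
    linear_combination 2 * e3 + (-(x₁ + x₂) ^ 2 + l * (y₁ + y₂) ^ 2) * h3
  by_cases hy : y₁ = y₂
  · subst hy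
    have hx : x₁ = x₂ := by
      have : (x₁ - x₂) ^ 2 = 0 := by rw [key]; ring
      have := pow_eq_zero_iff (n := 2) (by norm_num) |>.mp this
      exact sub_eq_zero.mp this
    exact h12 (by rw [hx])
  · apply hl
    refine ⟨(x₁ - x₂) / (y₁ - y₂), ?_⟩
    have hyne : y₁ - y₂ ≠ 0 := sub_ne_zero.mpr hy
    field_simp
    linear_combination key
end

section
/- Let q = 3^m, let λ ∈ F_q be a non-square, and let Q = {(x, y, x² − λy²) : x, y ∈ F_q} ⊆ F_q³. Then Q is a complete capset: Q is a capset, and for every point P ∈ F_q³ \ Q there exist two distinct points A, B ∈ Q with A + B + P = 0. -/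
/-- Let `q = 3^m`, `λ ∈ F_q` a non-square, and
`Q = {(x, y, x² − λy²) : x, y ∈ F_q} ⊆ F_q³`. Then `Q` is a complete capset. -/
theorem paraboloid_complete_capset (m : ℕ) (hm : 1 ≤ m)
    (F : Type) [Field F] [Fintype F] (hcard : Fintype.card F = 3 ^ m)
    (l : F) (hl : ¬∃ y : F, y ^ 2 = l)
    (Q : Set (F × F × F))
    (hQ : Q = {p : F × F × F | ∃ x y : F, p = (x, y, x ^ 2 - l * y ^ 2)}) :
    (∀ P₁ ∈ Q, ∀ P₂ ∈ Q, ∀ P₃ ∈ Q,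
      P₁ ≠ P₂ → P₁ ≠ P₃ → P₂ ≠ P₃ → P₁ + P₂ + P₃ ≠ 0) ∧
    (∀ P : F × F × F, P ∉ Q → ∃ A ∈ Q, ∃ B ∈ Q, A ≠ B ∧ A + B + P = 0) := by
  -- characteristic 3
  have hl0 : l ≠ 0 := fun h => hl ⟨0, by simp [h]⟩
  obtain ⟨n, hp, hcn⟩ := FiniteField.card F (ringChar F)
  have hdvd : ringChar F ∣ 3 := by
    refine hp.dvd_of_dvd_pow (n := m) ?_
    rw [← hcard, hcn]
    exact dvd_pow_self _ n.2.ne'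
  have hr : ringChar F = 3 := (Nat.prime_dvd_prime_iff_eq hp Nat.prime_three).mp hdvd
  have h3 : (3 : F) = 0 := by
    have := ringChar.Nat.cast_ringChar (R := F)
    rw [hr] at this; exact_mod_cast this
  have h2 : (2 : F) ≠ 0 := fun h => one_ne_zero (α := F) (by linear_combination h3 - h)
  subst hQ
  constructor
  · rintro P₁ ⟨x₁, y₁, rfl⟩ P₂ ⟨x₂, y₂, rfl⟩ P₃ ⟨x₃, y₃, rfl⟩ h12 h13 h23 habs
    simp only [Prod.mk_add_mk, Prod.ext_iff, Prod.fst_zero, Prod.snd_zero] at habs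
    obtain ⟨e1, e2, e3⟩ := habs
    have key : (x₁ - x₂) ^ 2 = l * (y₁ - y₂) ^ 2 := by
      linear_combination 2 * e3 - 2 * (x₃ - x₁ - x₂) * e1 + 2 * l * (y₃ - y₁ - y₂) * e2 +
        (l * (y₁ + y₂) ^ 2 - (x₁ + x₂) ^ 2) * h3
    have hy : y₁ = y₂ := by
      by_contra hy
      have hyne : y₁ - y₂ ≠ 0 := sub_ne_zero.mpr hy
      refine hl ⟨(x₁ - x₂) / (y₁ - y₂), ?_⟩
      field_simp
      linear_combination key
    have hx : x₁ = x₂ := by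
      have hsq : (x₁ - x₂) ^ 2 = 0 := by rw [key, hy]; ring
      have := pow_eq_zero_iff (n := 2) (by norm_num) |>.mp hsq
      exact sub_eq_zero.mp this
    exact h12 (by rw [hx, hy])
  · rintro ⟨a, b, c⟩ hP
    have hd : c - a ^ 2 + l * b ^ 2 ≠ 0 := by
      intro h
      exact hP ⟨a, b, by simp only [Prod.mk.injEq, true_and]; linear_combination h⟩
    -- solve u² - l v² = d
    obtain ⟨u, v, huv⟩ :
        ∃ u v : F, u ^ 2 - l * v ^ 2 = c - a ^ 2 + l * b ^ 2 := by
      have hodd : Fintype.card F % 2 = 1 := by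
        rw [hcard]; exact Nat.odd_iff.mp (Odd.pow ⟨1, by norm_num⟩)
      have hdeg : (Polynomial.C (-l) * Polynomial.X ^ 2 : Polynomial F).degree = 2 := by
        rw [Polynomial.degree_C_mul (neg_ne_zero.mpr hl0), Polynomial.degree_X_pow]; rfl
      obtain ⟨u, v, huv⟩ := FiniteField.exists_root_sum_quadratic
        (f := Polynomial.X ^ 2) (g := Polynomial.C (-l) * Polynomial.X ^ 2
          - Polynomial.C (c - a ^ 2 + l * b ^ 2))
        (Polynomial.degree_X_pow 2)
        (by rw [Polynomial.degree_sub_C (by rw [hdeg]; norm_num), hdeg]) hodd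
      refine ⟨u, v, ?_⟩
      simp only [Polynomial.eval_sub, Polynomial.eval_mul, Polynomial.eval_pow,
        Polynomial.eval_C, Polynomial.eval_X] at huv
      linear_combination huv
    refine ⟨(a + u, b + v, (a + u) ^ 2 - l * (b + v) ^ 2), ⟨_, _, rfl⟩,
      (a - u, b - v, (a - u) ^ 2 - l * (b - v) ^ 2), ⟨_, _, rfl⟩, ?_, ?_⟩
    · intro h
      simp only [Prod.ext_iff] at h
      have hu : u = 0 := by
        have h2u : 2 * u = 0 := by linear_combination h.1
        exact (mul_eq_zero.mp h2u).resolve_left h2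
      have hv : v = 0 := by
        have h2v : 2 * v = 0 := by linear_combination h.2.1
        exact (mul_eq_zero.mp h2v).resolve_left h2
      rw [hu, hv] at huv
      exact hd (by linear_combination -huv)
    · simp only [Prod.mk_add_mk, Prod.ext_iff, Prod.fst_zero, Prod.snd_zero]
      exact ⟨by linear_combination a * h3, by linear_combination b * h3,
        by linear_combination 2 * huv + c * h3⟩
end

section
/- Let q = 3^m with m odd, let C = {(x, x²) : x ∈ F_q, x ≠ 0} ∪ {(x, −x²) : x ∈ F_q, x ≠ 0} ⊆ F_q², and let (a, b) ∈ F_q² \ C with a ≠ 0. Set x_1 = (a² − b)/a and x_2 = −(a + x_1). Then x_1 ≠ 0, x_2 ≠ 0, the points (x_1, x_1²) and (x_2, −x_2²) lie in C, and (a, b) + (x_1, x_1²) + (x_2, −x_2²) = 0. -/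
/-- Let `q = 3^m` with `m` odd, `C` the union of the two punctured parabolas,
and `(a, b) ∈ F_q² \ C` with `a ≠ 0`. Set `x₁ = (a² − b)/a` and `x₂ = −(a + x₁)`.
Then `x₁ ≠ 0`, `x₂ ≠ 0`, `(x₁, x₁²), (x₂, −x₂²) ∈ C`, and
`(a, b) + (x₁, x₁²) + (x₂, −x₂²) = 0`. -/
theorem completion_points_explicit (m : ℕ) (hm : 1 ≤ m) (hodd : Odd m)
    (F : Type) [Field F] [Fintype F] (hcard : Fintype.card F = 3 ^ m)
    (C : Set (F × F))
    (hC : C = {p : F × F | (∃ x : F, x ≠ 0 ∧ p = (x, x ^ 2)) ∨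
      (∃ x : F, x ≠ 0 ∧ p = (x, -x ^ 2))})
    (a b : F) (ha : a ≠ 0) (hab : (a, b) ∉ C)
    (x₁ x₂ : F) (hx₁ : x₁ = (a ^ 2 - b) / a) (hx₂ : x₂ = -(a + x₁)) :
    x₁ ≠ 0 ∧ x₂ ≠ 0 ∧ (x₁, x₁ ^ 2) ∈ C ∧ (x₂, -x₂ ^ 2) ∈ C ∧
      (a, b) + (x₁, x₁ ^ 2) + (x₂, -x₂ ^ 2) = 0 := by
  have h3 : (3 : F) = 0 := by
    have h := Nat.cast_card_eq_zero F
    rw [hcard] at h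
    push_cast at h
    exact pow_eq_zero_iff (by omega) |>.mp h
  subst hC
  have hb1 : b ≠ a ^ 2 := fun h => hab (Or.inl ⟨a, ha, by simp [h]⟩)
  have hb2 : b ≠ -a ^ 2 := fun h => hab (Or.inr ⟨a, ha, by simp [h]⟩)
  have hx1 : x₁ ≠ 0 := by
    rw [hx₁, div_ne_zero_iff]
    exact ⟨sub_ne_zero.mpr (Ne.symm hb1), ha⟩
  have hx1' : a * x₁ = a ^ 2 - b := by
    rw [hx₁]; field_simp
  have hx2 : x₂ ≠ 0 := by
    intro h
    apply hb2
    rw [h] at hx₂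
    have he : x₁ = -a := by linear_combination hx₂
    linear_combination hx1' - a * he + a ^ 2 * h3
  refine ⟨hx1, hx2, Or.inl ⟨x₁, hx1, rfl⟩, Or.inr ⟨x₂, hx2, rfl⟩, ?_⟩
  have hsum : a + x₁ + x₂ = 0 := by rw [hx₂]; ring
  have h2 : b + x₁ ^ 2 + -x₂ ^ 2 = 0 := by
    rw [hx₂]
    linear_combination hx1' - a * x₁ * h3
  rw [Prod.ext_iff]
  constructor <;> simpa using (by assumption : _)
end
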